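/- Let ρ be a qubit density matrix with p00 = ⟨0|ρ|0⟩ and p01 = ⟨0|ρ|1⟩. For any angle θ, applying the two-qubit unitary that is the identity on span{|00⟩,|11⟩} and a Y-rotation by θ on span{|01⟩,|10⟩} to ρ⊗ρ and tracing out the second qubit gives an output state σ with ⟨0|σ|1⟩ = p01(cos θ + (2p00 − 1) sin θ). -/

import Mathlib

open Matrix Kronecker ComplexOrder

/-- Partial trace over the second qubit. -/
noncomputable def ptraceB (ρ : Matrix (Fin 2 × Fin 2) (Fin 2 × Fin 2) ℂ) :
    Matrix (Fin 2) (Fin 2) ℂ :=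
  Matrix.of fun a c => ∑ b : Fin 2, ρ (a, b) (c, b)

/-- The allowed two-qubit unitary: identity on `span{|00⟩,|11⟩}`, a `Y`-rotation by
angle `θ` on the ordered basis `(|01⟩,|10⟩)`. -/
noncomputable def Uθ (θ : ℝ) : Matrix (Fin 2 × Fin 2) (Fin 2 × Fin 2) ℂ :=
  Matrix.of fun x y =>
    if x = ((0 : Fin 2), (0 : Fin 2)) ∧ y = ((0 : Fin 2), (0 : Fin 2)) then 1
    else if x = ((0 : Fin 2), (1 : Fin 2)) ∧ y = ((0 : Fin 2), (1 : Fin 2)) then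
      (Real.cos θ : ℂ)
    else if x = ((0 : Fin 2), (1 : Fin 2)) ∧ y = ((1 : Fin 2), (0 : Fin 2)) then
      -(Real.sin θ : ℂ)
    else if x = ((1 : Fin 2), (0 : Fin 2)) ∧ y = ((0 : Fin 2), (1 : Fin 2)) then
      (Real.sin θ : ℂ)
    else if x = ((1 : Fin 2), (0 : Fin 2)) ∧ y = ((1 : Fin 2), (0 : Fin 2)) then
      (Real.cos θ : ℂ)
    else if x = ((1 : Fin 2), (1 : Fin 2)) ∧ y = ((1 : Fin 2), (1 : Fin 2)) then 1
    else 0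

lemma ptraceB_Uθ_conj_apply_zero_one (X : Matrix (Fin 2 × Fin 2) (Fin 2 × Fin 2) ℂ) (θ : ℝ) :
    ptraceB (Uθ θ * X * (Uθ θ)ᴴ) 0 1 =
      (Real.cos θ : ℂ) * (X (0, 0) (1, 0) + X (0, 1) (1, 1)) +
        (Real.sin θ : ℂ) * (X (0, 0) (0, 1) - X (1, 0) (1, 1)) := by
  simp only [ptraceB, Uθ, mul_apply, conjTranspose_apply, of_apply, Fin.sum_univ_two,
    Fintype.sum_prod_type, Prod.mk.injEq, and_true, and_false, one_ne_zero, zero_ne_one,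
    ↓reduceIte, RCLike.star_def, map_zero, map_one, Complex.conj_ofReal, mul_zero, zero_mul,
    mul_one, one_mul, add_zero, zero_add, neg_mul]
  ring

lemma ptraceB_Uθ_conj_kronecker_self_apply_zero_one (ρ : Matrix (Fin 2) (Fin 2) ℂ) (θ : ℝ) :
    ptraceB (Uθ θ * (ρ ⊗ₖ ρ) * (Uθ θ)ᴴ) 0 1 =
      ρ 0 1 * (ρ.trace * (Real.cos θ : ℂ) + (ρ 0 0 - ρ 1 1) * (Real.sin θ : ℂ)) := by
  rw [ptraceB_Uθ_conj_apply_zero_one]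
  simp only [kroneckerMap_apply, trace_fin_two]
  ring

theorem output_coherence_after_rotation_general (ρ : Matrix (Fin 2) (Fin 2) ℂ)
    (htr : ρ.trace = 1) (θ : ℝ) :
    ptraceB (Uθ θ * (ρ ⊗ₖ ρ) * (Uθ θ)ᴴ) 0 1 =
      ρ 0 1 * ((Real.cos θ : ℂ) + (2 * ρ 0 0 - 1) * (Real.sin θ : ℂ)) := by
  have h11 : ρ 1 1 = 1 - ρ 0 0 := by
    rw [trace_fin_two] at htr
    linear_combination htr
  rw [ptraceB_Uθ_conj_kronecker_self_apply_zero_one, htr, h11]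
  ring

/-- Applying the rotation in the degenerate subspace to `ρ ⊗ ρ` and tracing out the
second qubit gives an output whose off-diagonal element is
`p01 (cos θ + (2 p00 − 1) sin θ)`. -/
theorem output_coherence_after_rotation (ρ : Matrix (Fin 2) (Fin 2) ℂ)
    (hρ : ρ.PosSemidef) (htr : ρ.trace = 1) (θ : ℝ) :
    ptraceB (Uθ θ * (ρ ⊗ₖ ρ) * (Uθ θ)ᴴ) 0 1 =
      ρ 0 1 * ((Real.cos θ : ℂ) + (2 * ρ 0 0 - 1) * (Real.sin θ : ℂ)) :=
  output_coherence_after_rotation_general ρ htr θ
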